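/- arXiv:1603.00324 — 7 statements merged into one kernel-verified Lean document; each statement's English description precedes it below -/
import Mathlib

section
/- Let 0 ≤ α < 1 and let ψ ∈ L²(ℝ) be such that its Fourier transform ψ̂ is continuous and satisfies |ψ̂(ξ)| ≤ C(1+|ξ|)^{−r} for all ξ ∈ ℝ, for some constant C > 0 and some exponent r > 1. Then the function ξ ↦ m_ψ(ξ) is continuous on ℝ. -/
open MeasureTheory Filter Real Set
open scoped FourierTransform ENNReal

/-- β(ω) = (1+|ω|)^(-α) -/
noncomputable def beta (α ω : ℝ) : ℝ := (1 + |ω|) ^ (-α)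

/-- The symbol m_ψ(ξ) = ∫ |ψ̂(β(ω)(ξ-ω))|² β(ω) dω. -/
noncomputable def symbol (α : ℝ) (ψ : ℝ → ℂ) (ξ : ℝ) : ℝ :=
  ∫ ω : ℝ, ‖𝓕 ψ (beta α ω * (ξ - ω))‖ ^ 2 * beta α ω

lemma beta_pos (α ω : ℝ) : 0 < beta α ω :=
  Real.rpow_pos_of_pos (by positivity) _

lemma beta_le_one (α ω : ℝ) (hα0 : 0 ≤ α) : beta α ω ≤ 1 :=
  Real.rpow_le_one_of_one_le_of_nonpos (le_add_of_nonneg_right (abs_nonneg ω))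
    (neg_nonpos.mpr hα0)

lemma continuous_beta (α : ℝ) : Continuous (beta α) :=
  (continuous_const.add continuous_abs).rpow_const
    (fun x => Or.inl (by show (1:ℝ) + |x| ≠ 0; positivity))

lemma key_bound (α : ℝ) (hα0 : 0 ≤ α) (ψ : ℝ → ℂ) (C r : ℝ) (hC : 0 < C) (hr : 1 < r)
    (hdecay : ∀ ξ : ℝ, ‖𝓕 ψ ξ‖ ≤ C * (1 + |ξ|) ^ (-r))
    (M ξ ω : ℝ) (hM : 0 ≤ M) (hξ : |ξ| ≤ M) :
    ‖𝓕 ψ (beta α ω * (ξ - ω))‖ ^ 2 * beta α ω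
      ≤ C ^ 2 * (1 + M) ^ 2 * (1 + |ω|) ^ (α - 2) := by
  set b := beta α ω with hb
  set B := 1 + |ω| with hBdef
  have hB1 : 1 ≤ B := le_add_of_nonneg_right (abs_nonneg ω)
  have hBpos : 0 < B := by linarith
  have hbpos : 0 < b := beta_pos α ω
  have hble : b ≤ 1 := beta_le_one α ω hα0
  set t := b * (ξ - ω) with ht
  have habs : |t| = b * |ξ - ω| := by
    rw [ht, abs_mul, abs_of_pos hbpos]
  have h1 : ‖𝓕 ψ t‖ ≤ C * (1 + |t|) ^ (-r) := hdecay t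
  have h2 : (1 + |t|) ^ (-r) ≤ (1 + |t|)⁻¹ := by
    rw [← Real.rpow_neg_one (1 + |t|)]
    exact Real.rpow_le_rpow_of_exponent_le (le_add_of_nonneg_right (abs_nonneg t)) (by linarith)
  have h3 : (1 + |t|)⁻¹ ≤ b⁻¹ * (1 + |ξ - ω|)⁻¹ := by
    rw [← mul_inv]
    apply inv_anti₀ (by positivity)
    rw [habs]; nlinarith [abs_nonneg (ξ - ω)]
  have h4 : (1 + |ξ - ω|)⁻¹ ≤ (1 + M) * B⁻¹ := by
    have hω : |ω| ≤ M + |ξ - ω| := by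
      have := abs_sub_abs_le_abs_sub ω ξ
      have : |ω - ξ| = |ξ - ω| := abs_sub_comm ω ξ
      nlinarith [abs_sub_abs_le_abs_sub ω ξ]
    have hkey : B ≤ (1 + M) * (1 + |ξ - ω|) := by
      rw [hBdef]; nlinarith [abs_nonneg (ξ - ω)]
    have hx : (0:ℝ) < 1 + |ξ - ω| := by positivity
    rw [← one_div, show (1 + M) * B⁻¹ = (1 + M) / B from (div_eq_mul_inv _ _).symm,
      div_le_div_iff₀ hx hBpos]
    linarith
  have hnorm : ‖𝓕 ψ t‖ ≤ C * (1 + M) * (b⁻¹ * B⁻¹) := by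
    calc ‖𝓕 ψ t‖ ≤ C * (1 + |t|) ^ (-r) := h1
      _ ≤ C * (b⁻¹ * ((1 + M) * B⁻¹)) := by
          apply mul_le_mul_of_nonneg_left _ hC.le
          refine h2.trans (h3.trans ?_)
          exact mul_le_mul_of_nonneg_left h4 (by positivity)
      _ = C * (1 + M) * (b⁻¹ * B⁻¹) := by ring
  have hsq : ‖𝓕 ψ t‖ ^ 2 ≤ (C * (1 + M) * (b⁻¹ * B⁻¹)) ^ 2 := by
    apply pow_le_pow_left₀ (norm_nonneg _) hnorm
  have hbinv : b⁻¹ = B ^ α := by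
    rw [hb, beta, Real.rpow_neg hBpos.le, inv_inv, hBdef]
  have hfinal : (b⁻¹) ^ 2 * B⁻¹ ^ 2 * b = B ^ (α - 2) := by
    have hbb : (b⁻¹) ^ 2 * B⁻¹ ^ 2 * b = b⁻¹ * B⁻¹ ^ 2 := by
      field_simp
    rw [hbb, hbinv, Real.rpow_sub hBpos, div_eq_mul_inv, Real.rpow_two, inv_pow]
  calc ‖𝓕 ψ t‖ ^ 2 * b ≤ (C * (1 + M) * (b⁻¹ * B⁻¹)) ^ 2 * b := by
        apply mul_le_mul_of_nonneg_right hsq hbpos.le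
    _ = C ^ 2 * (1 + M) ^ 2 * ((b⁻¹) ^ 2 * B⁻¹ ^ 2 * b) := by ring
    _ = C ^ 2 * (1 + M) ^ 2 * B ^ (α - 2) := by rw [hfinal]

/-- under the decay assumption with r > 1, m_ψ is continuous. -/
theorem symbol_continuous (α : ℝ) (hα0 : 0 ≤ α) (hα1 : α < 1)
    (ψ : ℝ → ℂ) (hψ : MemLp ψ 2 (volume : Measure ℝ))
    (C r : ℝ) (hC : 0 < C) (hr : 1 < r)
    (hcont : Continuous (𝓕 ψ))
    (hdecay : ∀ ξ : ℝ, ‖𝓕 ψ ξ‖ ≤ C * (1 + |ξ|) ^ (-r)) :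
    Continuous (symbol α ψ) := by
  rw [continuous_iff_continuousAt]
  intro ξ₀
  set M := 1 + |ξ₀| with hM
  have hMnn : 0 ≤ M := by positivity
  apply continuousAt_of_dominated
    (bound := fun ω => C ^ 2 * (1 + M) ^ 2 * (1 + |ω|) ^ (α - 2))
  · filter_upwards with ξ
    apply Continuous.aestronglyMeasurable
    have hb : Continuous (beta α) := continuous_beta α
    exact ((hcont.comp (hb.mul (continuous_const.sub continuous_id))).norm.pow 2).mul hb
  · filter_upwards [Metric.closedBall_mem_nhds ξ₀ one_pos] with ξ hξ
    filter_upwards with ω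
    rw [Real.norm_of_nonneg (mul_nonneg (by positivity) (beta_pos α ω).le)]
    apply key_bound α hα0 ψ C r hC hr hdecay M ξ ω hMnn
    have : |ξ - ξ₀| ≤ 1 := by simpa [Real.dist_eq] using hξ
    calc |ξ| = |(ξ - ξ₀) + ξ₀| := by ring_nf
      _ ≤ |ξ - ξ₀| + |ξ₀| := abs_add_le _ _
      _ ≤ M := by rw [hM]; linarith
  · have h2 : (Module.finrank ℝ ℝ : ℝ) < 2 - α := by
      simp [Module.finrank_self]; linarith
    have := (integrable_one_add_norm (E := ℝ) (μ := volume) h2).const_mul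
      (C ^ 2 * (1 + M) ^ 2)
    convert this using 2 with ω
    rw [Real.norm_eq_abs, neg_sub]
  · filter_upwards with ω
    apply Continuous.continuousAt
    exact ((hcont.comp (continuous_const.mul (continuous_id.sub continuous_const))).norm.pow 2).mul
      continuous_const
end

section
/- Let 0 < α < 1 and let ψ ∈ L²(ℝ) be such that ψ̂ is continuous and satisfies |ψ̂(ξ)| ≤ C(1+|ξ|)^{−r} for all ξ ∈ ℝ, with r > α/(2(1−α)). For ξ > 2/α set ω*_ξ := (1−αξ)/(1−α) and I_2(ξ) := [ω*_ξ − αξ^α/(2(1−α)), ω*_ξ + αξ^α/(2(1−α))]. Then ∫_{I_2(ξ)} |ψ̂(r_ξ(ω))|² β(ω) dω → 0 as ξ → +∞. -/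
open MeasureTheory Filter Real Set
open scoped FourierTransform ENNReal

set_option maxHeartbeats 1000000 in
/-- the contribution of the interval
I₂(ξ) = [ω*_ξ − αξ^α/(2(1−α)), ω*_ξ + αξ^α/(2(1−α))], ω*_ξ = (1−αξ)/(1−α),
to m_ψ(ξ) tends to 0 as ξ → +∞. -/
theorem integral_I2_tendsto_zero (α : ℝ) (hα0 : 0 < α) (hα1 : α < 1)
    (ψ : ℝ → ℂ) (hψ : MemLp ψ 2 (volume : Measure ℝ))
    (C r : ℝ) (hC : 0 < C) (hr : α / (2 * (1 - α)) < r)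
    (hcont : Continuous (𝓕 ψ))
    (hdecay : ∀ ξ : ℝ, ‖𝓕 ψ ξ‖ ≤ C * (1 + |ξ|) ^ (-r)) :
    Tendsto (fun ξ : ℝ =>
      ∫ ω in Set.Icc
          ((1 - α * ξ) / (1 - α) - α * ξ ^ α / (2 * (1 - α)))
          ((1 - α * ξ) / (1 - α) + α * ξ ^ α / (2 * (1 - α))),
        ‖𝓕 ψ (beta α ω * (ξ - ω))‖ ^ 2 * beta α ω)
      atTop (nhds 0) := by
  have h1α : (0:ℝ) < 1 - α := by linarith
  have hrpos : 0 < r := lt_trans (by positivity) hr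
  set m : ℝ := α / (4 * (1 - α)) with hm_def
  set K : ℝ := 4 / (1 - α) with hK_def
  have hm : 0 < m := by positivity
  have hK : 0 < K := by positivity
  set e : ℝ := 2 * r * (1 - α) with he_def
  have he : 0 < e := by positivity
  set D : ℝ := C ^ 2 * K ^ (2 * α * r) * m ^ (-α) * (α / (1 - α)) with hD_def
  have hD : 0 < D := by positivity
  apply squeeze_zero_norm' (a := fun ξ : ℝ => D * ξ ^ (-e))
  · filter_upwards [eventually_ge_atTop (max (2 / α) (max 1 ((2:ℝ) ^ ((1:ℝ) / (1 - α)))))]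
      with ξ hξ
    have hξ1 : (1:ℝ) ≤ ξ := le_trans (le_max_left _ _) (le_trans (le_max_right _ _) hξ)
    have hξpos : (0:ℝ) < ξ := by linarith
    have h2 : 2 ≤ α * ξ := by
      have : 2 / α ≤ ξ := le_trans (le_max_left _ _) hξ
      rw [div_le_iff₀ hα0] at this
      linarith [this]
    set P : ℝ := ξ ^ α with hP_def
    have hP : 0 < P := rpow_pos_of_pos hξpos α
    have hP2 : 2 * P ≤ ξ := by
      have h2le : (2:ℝ) ^ ((1:ℝ) / (1 - α)) ≤ ξ :=
        le_trans (le_max_right _ _) (le_trans (le_max_right _ _) hξ)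
      have h1 : (2:ℝ) ≤ ξ ^ (1 - α) := by
        have := Real.rpow_le_rpow (by positivity) h2le h1α.le
        rwa [← Real.rpow_mul (by norm_num : (0:ℝ) ≤ 2), one_div_mul_cancel h1α.ne',
          Real.rpow_one] at this
      calc 2 * P ≤ ξ ^ (1 - α) * P := mul_le_mul_of_nonneg_right h1 hP.le
        _ = ξ := by rw [hP_def, ← Real.rpow_add hξpos]; norm_num
    set a : ℝ := (1 - α * ξ) / (1 - α) - α * P / (2 * (1 - α)) with ha_def
    set b : ℝ := (1 - α * ξ) / (1 - α) + α * P / (2 * (1 - α)) with hb_def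
    -- bounds on the interval
    have hb_ub : b ≤ -(m * ξ) := by
      have hnum : (0:ℝ) ≤ 3 * (α * ξ) - 4 - 2 * (α * P) := by
        nlinarith [mul_le_mul_of_nonneg_left hP2 hα0.le]
      have heq : -(m * ξ) - b = (3 * (α * ξ) - 4 - 2 * (α * P)) / (4 * (1 - α)) := by
        rw [hm_def, hb_def]
        field_simp
        ring
      have h0 : (0:ℝ) ≤ -(m * ξ) - b := by
        rw [heq]
        exact div_nonneg hnum (by positivity)
      linarith
    have ha_lb : -(K * ξ) + 1 ≤ a := by
      have hPξ : P ≤ ξ := by linarith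
      have hαP : α * P ≤ P := by nlinarith
      have hαξ : α * ξ ≤ ξ := by nlinarith
      have hnum : (0:ℝ) ≤ 2 * α + 8 * ξ - 2 * (α * ξ) - α * P := by linarith
      have heq : a - (-(K * ξ) + 1)
          = (2 * α + 8 * ξ - 2 * (α * ξ) - α * P) / (2 * (1 - α)) := by
        rw [hK_def, ha_def]
        field_simp
        ring
      have h0 : (0:ℝ) ≤ a - (-(K * ξ) + 1) := by
        rw [heq]
        exact div_nonneg hnum (by positivity)
      linarith
    -- the pointwise bound on the integrand
    set Bd : ℝ := (C * (K ^ (-α) * ξ ^ (1 - α)) ^ (-r)) ^ 2 * ((m * ξ) ^ (-α)) with hBd_def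
    have key : ∀ ω ∈ Set.Icc a b,
        ‖‖𝓕 ψ (beta α ω * (ξ - ω))‖ ^ 2 * beta α ω‖ ≤ Bd := by
      intro ω hω
      obtain ⟨hωa, hωb⟩ := hω
      have hωneg : ω ≤ -(m * ξ) := le_trans hωb hb_ub
      have hωlt0 : ω < 0 := lt_of_le_of_lt hωneg (by nlinarith)
      have habs : |ω| = -ω := abs_of_neg hωlt0
      have habs_lb : m * ξ ≤ |ω| := by rw [habs]; linarith
      have habs_ub : 1 + |ω| ≤ K * ξ := by rw [habs]; linarith [le_trans ha_lb hωa]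
      have hbpos : 0 < 1 + |ω| := by positivity
      -- β(ω) ≤ (m ξ)^(-α)
      have hβub : beta α ω ≤ (m * ξ) ^ (-α) := by
        apply Real.rpow_le_rpow_of_nonpos (by positivity) (by linarith [abs_nonneg ω])
          (by linarith)
      -- β(ω) ≥ (K ξ)^(-α)
      have hβlb : (K * ξ) ^ (-α) ≤ beta α ω :=
        Real.rpow_le_rpow_of_nonpos hbpos habs_ub (by linarith)
      have hβpos : 0 < beta α ω := Real.rpow_pos_of_pos hbpos _
      have hξω : ξ ≤ ξ - ω := by linarith
      have hrlb : K ^ (-α) * ξ ^ (1 - α) ≤ beta α ω * (ξ - ω) := by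
        have h1 : K ^ (-α) * ξ ^ (1 - α) = (K * ξ) ^ (-α) * ξ := by
          rw [Real.mul_rpow hK.le hξpos.le, mul_assoc,
            show (1 - α) = -α + 1 by ring, Real.rpow_add hξpos, Real.rpow_one]
        rw [h1]
        exact mul_le_mul hβlb hξω (by linarith) hβpos.le
      have hargpos : 0 < K ^ (-α) * ξ ^ (1 - α) := by positivity
      have hψb : ‖𝓕 ψ (beta α ω * (ξ - ω))‖ ≤ C * (K ^ (-α) * ξ ^ (1 - α)) ^ (-r) := by
        refine le_trans (hdecay _) ?_
        apply mul_le_mul_of_nonneg_left _ hC.le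
        apply Real.rpow_le_rpow_of_nonpos hargpos _ (by linarith)
        exact le_trans hrlb (le_trans (le_abs_self _) (by linarith))
      rw [Real.norm_of_nonneg (by positivity)]
      exact mul_le_mul (pow_le_pow_left₀ (norm_nonneg _) hψb 2) hβub hβpos.le (by positivity)
    have hba : b - a = α * P / (1 - α) := by
      rw [hb_def, ha_def]
      field_simp
      ring
    have hvol : (volume (Set.Icc a b)).toReal = α * P / (1 - α) := by
      rw [Real.volume_Icc, hba, ENNReal.toReal_ofReal (by positivity)]
    calc ‖∫ ω in Set.Icc a b, ‖𝓕 ψ (beta α ω * (ξ - ω))‖ ^ 2 * beta α ω‖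
        ≤ Bd * (volume (Set.Icc a b)).toReal :=
          norm_setIntegral_le_of_norm_le_const (by rw [Real.volume_Icc]; exact
            ENNReal.ofReal_lt_top) key
      _ = D * ξ ^ (-e) := by
          have eK : (K ^ (-α:ℝ)) ^ (-r:ℝ) = K ^ (α * r) := by
            rw [← Real.rpow_mul hK.le, neg_mul_neg]
          have eξ : (ξ ^ (1 - α:ℝ)) ^ (-r:ℝ) = ξ ^ ((1 - α) * (-r)) :=
            (Real.rpow_mul hξpos.le (1 - α) (-r)).symm
          have em : (m * ξ) ^ (-α:ℝ) = m ^ (-α:ℝ) * ξ ^ (-α:ℝ) :=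
            Real.mul_rpow hm.le hξpos.le
          have eK2 : K ^ (2 * α * r) = K ^ (α * r) * K ^ (α * r) := by
            rw [show 2 * α * r = α * r + (α * r) by ring, Real.rpow_add hK]
          have eξall : ξ ^ ((1 - α) * (-r)) * ξ ^ ((1 - α) * (-r)) * ξ ^ (-α:ℝ) * ξ ^ α
              = ξ ^ (-e) := by
            rw [← Real.rpow_add hξpos, ← Real.rpow_add hξpos, ← Real.rpow_add hξpos]
            congr 1
            rw [he_def]
            ring
          rw [hvol, hBd_def, hD_def, hP_def,
            Real.mul_rpow (by positivity : (0:ℝ) ≤ K ^ (-α:ℝ)) (by positivity),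
            eK, eξ, em, eK2, ← eξall]
          ring
  · have : Tendsto (fun ξ : ℝ => D * ξ ^ (-e)) atTop (nhds (D * 0)) :=
      (tendsto_rpow_neg_atTop he).const_mul D
    simpa using this
end

section
/- Let 0 ≤ α < 1 and s ∈ ℝ. For all ω, ω* ∈ ℝ one has w_s(ω* + β(ω*)^{−1}ω, ω*) ≤ (1+|ω|)^{|s|/(1−α)}. -/
open MeasureTheory Filter Real Set
open scoped FourierTransform ENNReal

/-- v_s(ω) = (1+|ω|)^s. -/
noncomputable def vs (s ω : ℝ) : ℝ := (1 + |ω|) ^ s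

/-- w_s(ω,ω*) = max{v_s(ω*)/v_s(ω), v_s(ω)/v_s(ω*)}. -/
noncomputable def ws (s ω ωs : ℝ) : ℝ := max (vs s ωs / vs s ω) (vs s ω / vs s ωs)

lemma ratio_rpow_le (B p q s : ℝ) (hp : 0 < p) (hq : 0 < q)
    (h1 : p / q ≤ B) (h2 : q / p ≤ B) : p ^ s / q ^ s ≤ B ^ |s| := by
  rcases le_total 0 s with hs | hs
  · rw [abs_of_nonneg hs, ← Real.div_rpow hp.le hq.le]
    exact Real.rpow_le_rpow (div_pos hp hq).le h1 hs
  · rw [abs_of_nonpos hs]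
    have heq : p ^ s / q ^ s = q ^ (-s) / p ^ (-s) := by
      rw [Real.rpow_neg hq.le, Real.rpow_neg hp.le]
      rw [div_eq_div_iff (by positivity) (by positivity)]
      field_simp
    rw [heq, ← Real.div_rpow hq.le hp.le]
    exact Real.rpow_le_rpow (div_pos hq hp).le h2 (by linarith)

/-- w_s(ω* + β(ω*)⁻¹ω, ω*) ≤ (1+|ω|)^{|s|/(1-α)}. -/
theorem weight_estimate (α s : ℝ) (hα0 : 0 ≤ α) (hα1 : α < 1) :
    ∀ ω ωs : ℝ, ws s (ωs + (beta α ωs)⁻¹ * ω) ωs ≤ (1 + |ω|) ^ (|s| / (1 - α)) := by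
  intro ω ωs
  have h1mα : (0:ℝ) < 1 - α := by linarith
  set a : ℝ := 1 + |ωs| with ha_def
  have ha : (1:ℝ) ≤ a := by simp [ha_def, abs_nonneg]
  have ha0 : (0:ℝ) < a := by linarith
  set c : ℝ := 1 + |ω| with hc_def
  have hc : (1:ℝ) ≤ c := by simp [hc_def, abs_nonneg]
  have hc0 : (0:ℝ) < c := by linarith
  have hβ : (beta α ωs)⁻¹ = a ^ α := by
    rw [beta, Real.rpow_neg (by positivity), inv_inv]
  rw [hβ]
  set x : ℝ := ωs + a ^ α * ω with hx_def
  set b : ℝ := 1 + |x| with hb_def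
  have hb : (1:ℝ) ≤ b := by simp [hb_def, abs_nonneg]
  have hb0 : (0:ℝ) < b := by linarith
  set e : ℝ := 1 / (1 - α) with he_def
  have he1 : (1:ℝ) ≤ e := by
    rw [he_def, le_div_iff₀ h1mα]; linarith
  set B : ℝ := c ^ e with hB_def
  have hB1 : (1:ℝ) ≤ B := Real.one_le_rpow hc (by linarith)
  have hB0 : (0:ℝ) < B := by linarith
  have hee : e * (1 - α) = 1 := by rw [he_def]; field_simp
  have hBc : B ^ (1 - α) = c := by
    rw [hB_def, ← Real.rpow_mul hc0.le, hee, Real.rpow_one]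
  have haα : (0:ℝ) < a ^ α := Real.rpow_pos_of_pos ha0 α
  have haαa : a ^ α ≤ a := by
    calc a ^ α ≤ a ^ (1:ℝ) := Real.rpow_le_rpow_of_exponent_le ha (by linarith)
    _ = a := Real.rpow_one a
  -- b ≤ a * c
  have hbac : b ≤ a * c := by
    have hx1 : |x| ≤ |ωs| + a ^ α * |ω| := by
      calc |x| ≤ |ωs| + |a ^ α * ω| := abs_add_le _ _
      _ = |ωs| + a ^ α * |ω| := by rw [abs_mul, abs_of_pos haα]
    have h2 : a ^ α * |ω| ≤ a * |ω| :=
      mul_le_mul_of_nonneg_right haαa (abs_nonneg ω)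
    calc b = 1 + |x| := hb_def
    _ ≤ 1 + |ωs| + a * |ω| := by linarith
    _ = a * c := by rw [ha_def, hc_def]; ring
  -- a ≤ b + a^α * |ω|
  have hab : a ≤ b + a ^ α * |ω| := by
    have hxx : |ωs| ≤ |x| + a ^ α * |ω| := by
      have hxo : ωs = x - a ^ α * ω := by rw [hx_def]; ring
      calc |ωs| = |x - a ^ α * ω| := by rw [← hxo]
      _ ≤ |x| + |a ^ α * ω| := abs_sub _ _
      _ = |x| + a ^ α * |ω| := by rw [abs_mul, abs_of_pos haα]
    simp only [ha_def, hb_def]; linarith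
  -- c ≤ B
  have hcB : c ≤ B := by
    calc c = c ^ (1:ℝ) := (Real.rpow_one c).symm
    _ ≤ c ^ e := Real.rpow_le_rpow_of_exponent_le hc he1
  -- b / a ≤ B
  have hba : b / a ≤ B := by
    rw [div_le_iff₀ ha0]
    calc b ≤ a * c := hbac
    _ ≤ a * B := mul_le_mul_of_nonneg_left hcB ha0.le
    _ = B * a := by ring
  -- a / b ≤ B
  have hab' : a / b ≤ B := by
    rcases le_total a B with h | h
    · calc a / b ≤ a := div_le_self ha0.le hb
      _ ≤ B := h
    · -- a ≥ B case
      have hω : |ω| = B ^ (1 - α) - 1 := by rw [hBc, hc_def]; ring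
      have key : a ^ α * |ω| ≤ a * (1 - 1 / B) := by
        have h1 : a ^ (α - 1) ≤ B ^ (α - 1) := by
          rw [show α - 1 = -(1 - α) by ring, Real.rpow_neg hB0.le, Real.rpow_neg ha0.le]
          exact inv_anti₀ (Real.rpow_pos_of_pos hB0 _)
            (Real.rpow_le_rpow hB0.le h h1mα.le)
        have h2 : B ^ (α - 1) * (B ^ (1 - α) - 1) = 1 - B ^ (α - 1) := by
          have hm : B ^ (α - 1) * B ^ (1 - α) = 1 := by
            rw [← Real.rpow_add hB0]; norm_num
          rw [mul_sub, hm, mul_one]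
        have h3 : 1 / B ≤ B ^ (α - 1) := by
          rw [one_div, ← Real.rpow_neg_one]
          exact Real.rpow_le_rpow_of_exponent_le hB1 (by linarith)
        have haa : a ^ α = a * a ^ (α - 1) := by
          rw [show α = 1 + (α - 1) by ring, Real.rpow_add ha0, Real.rpow_one]
          ring_nf
        have hω0 : 0 ≤ |ω| := abs_nonneg ω
        calc a ^ α * |ω| = a * (a ^ (α - 1) * |ω|) := by rw [haa]; ring
        _ ≤ a * (B ^ (α - 1) * |ω|) :=
            mul_le_mul_of_nonneg_left (mul_le_mul_of_nonneg_right h1 hω0) ha0.le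
        _ = a * (1 - B ^ (α - 1)) := by rw [hω, h2]
        _ ≤ a * (1 - 1 / B) := mul_le_mul_of_nonneg_left (by linarith) ha0.le
      rw [div_le_iff₀ hb0]
      have hbB : a / B ≤ b := by
        have h5 : a ≤ b + a * (1 - 1 / B) := le_trans hab (by linarith)
        have h6 : a * (1 / B) ≤ b := by
          have : a * (1 / B) = a - a * (1 - 1 / B) := by ring
          linarith [this]
        calc a / B = a * (1 / B) := by ring
        _ ≤ b := h6
      calc a = (a / B) * B := by field_simp
      _ ≤ b * B := mul_le_mul_of_nonneg_right hbB hB0.le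
      _ = B * b := by ring
  -- conclude
  have hgoal : (1 + |ω|) ^ (|s| / (1 - α)) = B ^ |s| := by
    rw [hB_def, ← Real.rpow_mul hc0.le, ← hc_def]
    congr 1
    rw [he_def]; ring
  rw [hgoal, ws, vs, vs, ← ha_def, ← hb_def]
  exact max_le (ratio_rpow_le B a b s ha0 hb0 hab' hba)
    (ratio_rpow_le B b a s hb0 ha0 hba hab')
end

section
/- Let 0 ≤ α < 1 and define Λ(ξ, ω) := (1+|ω|) / ( (1+|ξ|)^{1/(1−α)} · (1+|β(ω)^{−1}ξ + ω|) ) for ξ, ω ∈ ℝ. Then Λ is bounded above by 2^{1/(1−α)}: sup_{ξ,ω ∈ ℝ} Λ(ξ, ω) ≤ 2^{1/(1−α)}. -/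
open MeasureTheory Filter Real Set
open scoped FourierTransform ENNReal

/-- the function
Λ(ξ,ω) = (1+|ω|) / ((1+|ξ|)^{1/(1-α)}·(1+|β(ω)⁻¹ξ+ω|)) is bounded by 2^{1/(1-α)}:
sup_{ξ,ω} Λ(ξ,ω) ≤ 2^{1/(1-α)}. -/
theorem Lambda_bounded (α : ℝ) (hα0 : 0 ≤ α) (hα1 : α < 1) :
    ∀ ξ ω : ℝ,
      (1 + |ω|) /
          ((1 + |ξ|) ^ ((1 : ℝ) / (1 - α)) * (1 + |(beta α ω)⁻¹ * ξ + ω|)) ≤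
        (2 : ℝ) ^ ((1 : ℝ) / (1 - α)) := by
  intro ξ ω
  have h1α : 0 < 1 - α := by linarith
  set p : ℝ := 1 / (1 - α) with hpdef
  have hp1 : 1 ≤ p := by
    rw [hpdef, le_div_iff₀ h1α]; linarith
  have hω : (0:ℝ) < 1 + |ω| := by positivity
  have hξ : (0:ℝ) < 1 + |ξ| := by positivity
  have hden1 : (0:ℝ) < (1 + |ξ|) ^ p := Real.rpow_pos_of_pos hξ p
  have hden2 : (0:ℝ) < 1 + |(beta α ω)⁻¹ * ξ + ω| := by positivity
  have hbinv : (beta α ω)⁻¹ = (1 + |ω|) ^ α := by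
    rw [beta, Real.rpow_neg hω.le, inv_inv]
  rw [div_le_iff₀ (by positivity)]
  have h2p : (2:ℝ) ≤ 2 ^ p := by
    nth_rewrite 1 [← Real.rpow_one 2]
    exact (Real.rpow_le_rpow_left_iff (by norm_num)).2 hp1
  have hξp1 : (1:ℝ) ≤ (1 + |ξ|) ^ p :=
    Real.one_le_rpow (by linarith [abs_nonneg ξ]) (by linarith)
  by_cases hc : |ω| / 2 ≤ |(beta α ω)⁻¹ * ξ + ω|
  · calc 1 + |ω| ≤ 2 * (1 + |(beta α ω)⁻¹ * ξ + ω|) := by linarith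
    _ ≤ 2 ^ p * (1 + |(beta α ω)⁻¹ * ξ + ω|) :=
        mul_le_mul_of_nonneg_right h2p hden2.le
    _ = 2 ^ p * (1 * (1 + |(beta α ω)⁻¹ * ξ + ω|)) := by ring
    _ ≤ 2 ^ p * ((1 + |ξ|) ^ p * (1 + |(beta α ω)⁻¹ * ξ + ω|)) := by
        have h2ppos : (0:ℝ) ≤ 2 ^ p := by positivity
        exact mul_le_mul_of_nonneg_left
          (mul_le_mul_of_nonneg_right hξp1 hden2.le) h2ppos
  · push_neg at hc
    have hA : (0:ℝ) < (1 + |ω|) ^ α := Real.rpow_pos_of_pos hω α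
    have h1 : |ω| / 2 ≤ (1 + |ω|) ^ α * |ξ| := by
      have : |ω| ≤ |(beta α ω)⁻¹ * ξ + ω| + |(beta α ω)⁻¹ * ξ| := by
        have := abs_sub ((beta α ω)⁻¹ * ξ + ω) ((beta α ω)⁻¹ * ξ)
        simpa using this
      have habs : |(beta α ω)⁻¹ * ξ| = (1 + |ω|) ^ α * |ξ| := by
        rw [abs_mul, hbinv, abs_of_pos hA]
      linarith [habs ▸ this]
    have hneg : (1 + |ω|) ^ (-α) ≤ 1 :=
      Real.rpow_le_one_of_one_le_of_nonpos (by linarith [abs_nonneg ω]) (by linarith)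
    have hnegpos : (0:ℝ) < (1 + |ω|) ^ (-α) := Real.rpow_pos_of_pos hω _
    have hsplit : (1 + |ω|) ^ (1 - α) = (1 + |ω|) ^ (-α) + |ω| * (1 + |ω|) ^ (-α) := by
      rw [show (1:ℝ) - α = 1 + -α by ring, Real.rpow_add hω, Real.rpow_one]
      ring
    have h2 : |ω| * (1 + |ω|) ^ (-α) ≤ 2 * |ξ| := by
      have hmul : (1 + |ω|) ^ α * (1 + |ω|) ^ (-α) = 1 := by
        rw [← Real.rpow_add hω]; simp
      nlinarith [abs_nonneg ξ, abs_nonneg ω]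
    have hkey : (1 + |ω|) ^ ((1:ℝ) - α) ≤ 2 * (1 + |ξ|) := by
      rw [hsplit]; linarith
    have hraise : (1 + |ω|) ≤ 2 ^ p * (1 + |ξ|) ^ p := by
      have := Real.rpow_le_rpow (Real.rpow_nonneg hω.le _) hkey (by linarith : (0:ℝ) ≤ p)
      rw [← Real.rpow_mul hω.le] at this
      have hexp : (1 - α) * p = 1 := by
        rw [hpdef]; field_simp
      rw [hexp, Real.rpow_one] at this
      rwa [Real.mul_rpow (by norm_num) hξ.le] at this
    calc 1 + |ω| ≤ 2 ^ p * (1 + |ξ|) ^ p := hraise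
    _ ≤ 2 ^ p * ((1 + |ξ|) ^ p * (1 + |(beta α ω)⁻¹ * ξ + ω|)) := by
        have h2ppos : (0:ℝ) ≤ 2 ^ p := by positivity
        have hone : (1:ℝ) ≤ 1 + |(beta α ω)⁻¹ * ξ + ω| := by
          linarith [abs_nonneg ((beta α ω)⁻¹ * ξ + ω)]
        exact mul_le_mul_of_nonneg_left
          (le_mul_of_one_le_right hden1.le hone) h2ppos
end

section
/- Let r > 1. There exists a constant C > 0, depending only on r, such that for every θ > 0 and every x ∈ ℝ, ∫_ℝ (1+|t|)^{−r} (1+θ|x−t|)^{−r} dt ≤ C·( θ^{−1}(1+|x|)^{−r} + (1+θ|x|)^{−r} ). -/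
open MeasureTheory Filter Real Set
open scoped FourierTransform ENNReal

/-- the shear estimate
∫ (1+|t|)^{-r}(1+θ|x−t|)^{-r} dt ≤ C(θ⁻¹(1+|x|)^{-r} + (1+θ|x|)^{-r}). -/
theorem shear_lemma (r : ℝ) (hr : 1 < r) :
    ∃ C : ℝ, 0 < C ∧ ∀ θ : ℝ, 0 < θ → ∀ x : ℝ,
      (∫ t : ℝ, (1 + |t|) ^ (-r) * (1 + θ * |x - t|) ^ (-r)) ≤
        C * (θ⁻¹ * (1 + |x|) ^ (-r) + (1 + θ * |x|) ^ (-r)) := by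
  have hr0 : (0:ℝ) < r := lt_trans one_pos hr
  have hint : Integrable (fun t : ℝ => (1 + |t|) ^ (-r)) := by
    have h := integrable_one_add_norm (E := ℝ) (μ := volume) (r := r) (by simpa using hr)
    simpa [Real.norm_eq_abs] using h
  set A := ∫ t : ℝ, (1 + |t|) ^ (-r) with hA
  have hApos : 0 < A := by
    rw [hA]
    refine (integral_pos_iff_support_of_nonneg (fun t => ?_) hint).2 ?_
    · positivity
    · have : Function.support (fun t : ℝ => (1 + |t|) ^ (-r)) = Set.univ := by
        ext t; simp only [Function.mem_support, Set.mem_univ, iff_true]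
        positivity
      rw [this]; simp
  refine ⟨(2:ℝ) ^ r * A, by positivity, fun θ hθ x => ?_⟩
  -- integrability of the translated-scaled factor
  have hint2 : Integrable (fun t : ℝ => (1 + θ * |x - t|) ^ (-r)) := by
    have h1 : Integrable (fun u : ℝ => (1 + |θ * x - u|) ^ (-r)) :=
      hint.comp_sub_left (θ * x)
    have h2 : Integrable (fun t : ℝ => (1 + |θ * x - θ * t|) ^ (-r)) :=
      h1.comp_mul_left' hθ.ne'
    refine h2.congr (Filter.Eventually.of_forall fun t => ?_)
    show (1 + |θ * x - θ * t|) ^ (-r) = (1 + θ * |x - t|) ^ (-r)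
    rw [← mul_sub, abs_mul, abs_of_pos hθ]
  -- value of its integral
  have hval : (∫ t : ℝ, (1 + θ * |x - t|) ^ (-r)) = θ⁻¹ * A := by
    have e1 : (fun t : ℝ => (1 + θ * |x - t|) ^ (-r)) =
        fun t : ℝ => (fun u : ℝ => (1 + |θ * x - u|) ^ (-r)) (θ * t) := by
      funext t; simp only; rw [← mul_sub, abs_mul, abs_of_pos hθ]
    rw [e1, MeasureTheory.Measure.integral_comp_mul_left (fun u : ℝ => (1 + |θ * x - u|) ^ (-r)) θ,
      integral_sub_left_eq_self (fun u : ℝ => (1 + |u|) ^ (-r)) volume (θ * x)]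
    simp [abs_of_pos (inv_pos.2 hθ), smul_eq_mul, hA]
  -- integrability of the product
  have hf_int : Integrable (fun t : ℝ => (1 + |t|) ^ (-r) * (1 + θ * |x - t|) ^ (-r)) := by
    refine hint.mono (hint.1.mul hint2.1) (Filter.Eventually.of_forall fun t => ?_)
    have h1 : (0:ℝ) ≤ (1 + |t|) ^ (-r) := by positivity
    have h2 : (1 + θ * |x - t|) ^ (-r) ≤ 1 := by
      apply Real.rpow_le_one_of_one_le_of_nonpos
      · nlinarith [abs_nonneg (x - t)]
      · linarith
    have h3 : (0:ℝ) ≤ (1 + θ * |x - t|) ^ (-r) := by positivity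
    rw [Real.norm_eq_abs, Real.norm_eq_abs, abs_of_nonneg (mul_nonneg h1 h3),
      abs_of_nonneg h1]
    calc (1 + |t|) ^ (-r) * (1 + θ * |x - t|) ^ (-r) ≤ (1 + |t|) ^ (-r) * 1 :=
          mul_le_mul_of_nonneg_left h2 h1
      _ = (1 + |t|) ^ (-r) := mul_one _
  -- pointwise bound
  have hpt : ∀ t : ℝ, (1 + |t|) ^ (-r) * (1 + θ * |x - t|) ^ (-r) ≤
      ((2:ℝ) ^ r * (1 + |x|) ^ (-r)) * (1 + θ * |x - t|) ^ (-r) +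
      ((2:ℝ) ^ r * (1 + θ * |x|) ^ (-r)) * (1 + |t|) ^ (-r) := by
    intro t
    have ht0 : (0:ℝ) ≤ (1 + |t|) ^ (-r) := by positivity
    have hxt0 : (0:ℝ) ≤ (1 + θ * |x - t|) ^ (-r) := by positivity
    have hx0 : (0:ℝ) ≤ (1 + θ * |x|) ^ (-r) := by positivity
    have hxx0 : (0:ℝ) ≤ (1 + |x|) ^ (-r) := by positivity
    rcases le_total |x| (2 * |t|) with h | h
    · -- (1+|t|)^(-r) ≤ 2^r (1+|x|)^(-r)
      have hb : (1:ℝ) + |x| ≤ 2 * (1 + |t|) := by linarith [abs_nonneg t]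
      have hmono := Real.rpow_le_rpow_of_nonpos (by positivity : (0:ℝ) < 1 + |x|) hb
        (neg_nonpos.mpr hr0.le)
      rw [Real.mul_rpow (by norm_num) (by positivity)] at hmono
      have h2r : (2:ℝ) ^ (-r) = ((2:ℝ) ^ r)⁻¹ := by
        rw [Real.rpow_neg (by norm_num)]
      have key : (1 + |t|) ^ (-r) ≤ (2:ℝ) ^ r * (1 + |x|) ^ (-r) := by
        have h2pos : (0:ℝ) < (2:ℝ) ^ r := by positivity
        rw [h2r] at hmono
        calc (1 + |t|) ^ (-r) = (2:ℝ) ^ r * (((2:ℝ) ^ r)⁻¹ * (1 + |t|) ^ (-r)) := by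
              field_simp
          _ ≤ (2:ℝ) ^ r * (1 + |x|) ^ (-r) :=
              mul_le_mul_of_nonneg_left hmono h2pos.le
      have := mul_le_mul_of_nonneg_right key hxt0
      nlinarith [mul_nonneg (mul_nonneg (by positivity : (0:ℝ) ≤ (2:ℝ)^r) hx0) ht0]
    · -- |x - t| ≥ |x|/2 case
      have habs : |x| - |t| ≤ |x - t| := abs_sub_abs_le_abs_sub x t
      have hb : (1:ℝ) + θ * |x| ≤ 2 * (1 + θ * |x - t|) := by nlinarith
      have hmono := Real.rpow_le_rpow_of_nonpos
        (by positivity : (0:ℝ) < 1 + θ * |x|) hb (neg_nonpos.mpr hr0.le)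
      rw [Real.mul_rpow (by norm_num) (by positivity)] at hmono
      have h2r : (2:ℝ) ^ (-r) = ((2:ℝ) ^ r)⁻¹ := by
        rw [Real.rpow_neg (by norm_num)]
      have key : (1 + θ * |x - t|) ^ (-r) ≤ (2:ℝ) ^ r * (1 + θ * |x|) ^ (-r) := by
        have h2pos : (0:ℝ) < (2:ℝ) ^ r := by positivity
        rw [h2r] at hmono
        calc (1 + θ * |x - t|) ^ (-r)
            = (2:ℝ) ^ r * (((2:ℝ) ^ r)⁻¹ * (1 + θ * |x - t|) ^ (-r)) := by field_simp
          _ ≤ (2:ℝ) ^ r * (1 + θ * |x|) ^ (-r) :=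
              mul_le_mul_of_nonneg_left hmono h2pos.le
      have := mul_le_mul_of_nonneg_left key ht0
      nlinarith [mul_nonneg (mul_nonneg (by positivity : (0:ℝ) ≤ (2:ℝ)^r) hxx0) hxt0]
  -- combine
  have hg1 : Integrable (fun t : ℝ => ((2:ℝ) ^ r * (1 + |x|) ^ (-r)) * (1 + θ * |x - t|) ^ (-r)) :=
    hint2.const_mul _
  have hg2 : Integrable (fun t : ℝ => ((2:ℝ) ^ r * (1 + θ * |x|) ^ (-r)) * (1 + |t|) ^ (-r)) :=
    hint.const_mul _
  calc (∫ t : ℝ, (1 + |t|) ^ (-r) * (1 + θ * |x - t|) ^ (-r))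
      ≤ ∫ t : ℝ, (((2:ℝ) ^ r * (1 + |x|) ^ (-r)) * (1 + θ * |x - t|) ^ (-r) +
          ((2:ℝ) ^ r * (1 + θ * |x|) ^ (-r)) * (1 + |t|) ^ (-r)) :=
        integral_mono hf_int (hg1.add hg2) hpt
    _ = ((2:ℝ) ^ r * (1 + |x|) ^ (-r)) * (θ⁻¹ * A) +
          ((2:ℝ) ^ r * (1 + θ * |x|) ^ (-r)) * A := by
        rw [integral_add hg1 hg2, integral_const_mul, integral_const_mul, hval, ← hA]
    _ = ((2:ℝ) ^ r * A) * (θ⁻¹ * (1 + |x|) ^ (-r) + (1 + θ * |x|) ^ (-r)) := by ring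
end

section
/- Let 0 ≤ α < 1 and c > 0 be fixed. There exist constants C₁, C₂ > 0 and ε₀ > 0, independent of x, ω ∈ ℝ and of 0 < ε < ε₀, such that for all x, ω ∈ ℝ and all 0 < ε < ε₀: every point (y, η) ∈ Q^ε_{x,ω} satisfies |x − y| < C₁ ε β(ω) and |ω − η| < C₂ ε β(ω)^{−1}; equivalently, (x, ω) − Q^ε_{x,ω} ⊆ (−C₁ ε β(ω), C₁ ε β(ω)) × (−C₂ ε β(ω)^{−1}, C₂ ε β(ω)^{−1}). -/
open MeasureTheory Filter Real Set
open scoped FourierTransform ENNReal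

/-- p_α(ω) = sgn(ω)((1+(1−α)|ω|)^{1/(1−α)} − 1). -/
noncomputable def palpha (α ω : ℝ) : ℝ :=
  Real.sign ω * ((1 + (1 - α) * |ω|) ^ ((1 : ℝ) / (1 - α)) - 1)

/-- The rectangle U^ε_{j,k} of the admissible covering, with ω_j = p_α(εj). -/
noncomputable def Ujk (α c ε : ℝ) (j k : ℤ) : Set (ℝ × ℝ) :=
  (Set.Ioo (ε * beta α (palpha α (ε * j)) * (k - 1))
           (ε * beta α (palpha α (ε * j)) * (k + 1))) ×ˢ
  (Set.Ioo (palpha α (ε * j) - 2 * ε * c * (beta α (palpha α (ε * j)))⁻¹)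
           (palpha α (ε * j) + 2 * ε * c * (beta α (palpha α (ε * j)))⁻¹))

/-- Q^ε_{x,ω} = union of the U^ε_{j,k} containing (x,ω). -/
def Qset (α c ε x ω : ℝ) : Set (ℝ × ℝ) :=
  ⋃ (j : ℤ) (k : ℤ) (_ : (x, ω) ∈ Ujk α c ε j k), Ujk α c ε j k

private lemma rpow_two_mul_le (α a b : ℝ) (hα0 : 0 ≤ α) (hα1 : α ≤ 1) (ha : 0 ≤ a)
    (hb : 0 ≤ b) (h : a ≤ 2 * b) : a ^ α ≤ 2 * b ^ α := by
  calc a ^ α ≤ (2 * b) ^ α := Real.rpow_le_rpow ha h hα0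
    _ = 2 ^ α * b ^ α := Real.mul_rpow (by norm_num) hb
    _ ≤ 2 * b ^ α := by
        refine mul_le_mul_of_nonneg_right ?_ (Real.rpow_nonneg hb α)
        calc (2:ℝ) ^ α ≤ 2 ^ (1:ℝ) := Real.rpow_le_rpow_of_exponent_le (by norm_num) hα1
          _ = 2 := Real.rpow_one 2

/-- uniform localization of the sets Q^ε_{x,ω}. -/
theorem Qset_localized (α c : ℝ) (hα0 : 0 ≤ α) (hα1 : α < 1) (hc : 0 < c) :
    ∃ C₁ C₂ ε₀ : ℝ, 0 < C₁ ∧ 0 < C₂ ∧ 0 < ε₀ ∧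
      ∀ x ω ε : ℝ, 0 < ε → ε < ε₀ →
        ∀ y η : ℝ, (y, η) ∈ Qset α c ε x ω →
          |x - y| < C₁ * ε * beta α ω ∧ |ω - η| < C₂ * ε * (beta α ω)⁻¹ := by
  refine ⟨4, 8 * c, 1 / (4 * c), by norm_num, by positivity, by positivity, ?_⟩
  intro x ω ε hε hεε y η hmem
  simp only [Qset, mem_iUnion] at hmem
  obtain ⟨j, k, hx, hy⟩ := hmem
  simp only [Ujk, Set.mem_prod, Set.mem_Ioo] at hx hy
  set t := palpha α (ε * (j:ℝ)) with ht
  have hb1 : (0:ℝ) < 1 + |t| := by positivity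
  have hb1' : (1:ℝ) ≤ 1 + |t| := le_add_of_nonneg_right (abs_nonneg t)
  have hω1 : (0:ℝ) < 1 + |ω| := by positivity
  have hbpos : 0 < beta α t := Real.rpow_pos_of_pos hb1 _
  have hbωpos : 0 < beta α ω := Real.rpow_pos_of_pos hω1 _
  have hbinv : (beta α t)⁻¹ = (1 + |t|) ^ α := by
    rw [beta, Real.rpow_neg hb1.le, inv_inv]
  have hbωinv : (beta α ω)⁻¹ = (1 + |ω|) ^ α := by
    rw [beta, Real.rpow_neg hω1.le, inv_inv]
  have hYpos : (0:ℝ) < (1 + |t|) ^ α := Real.rpow_pos_of_pos hb1 _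
  have hXpos : (0:ℝ) < (1 + |ω|) ^ α := Real.rpow_pos_of_pos hω1 _
  -- the inverse of beta at t is at most 1 + |t|
  have hinv_le : (beta α t)⁻¹ ≤ 1 + |t| := by
    rw [hbinv]
    calc (1 + |t|) ^ α ≤ (1 + |t|) ^ (1:ℝ) :=
          Real.rpow_le_rpow_of_exponent_le hb1' hα1.le
      _ = 1 + |t| := Real.rpow_one _
  -- ω is close to t
  have hωt : |ω - t| < 2 * ε * c * (beta α t)⁻¹ := by
    rw [abs_sub_lt_iff]; constructor <;> linarith [hx.2.1, hx.2.2]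
  have h2εc : 2 * ε * c < 1 / 2 := by
    have h4 : ε * (4 * c) < 1 := (lt_div_iff₀ (by positivity)).mp hεε
    linarith
  have hωt' : |ω - t| < (1 / 2) * (1 + |t|) := by
    calc |ω - t| < 2 * ε * c * (beta α t)⁻¹ := hωt
      _ ≤ 2 * ε * c * (1 + |t|) := by
          exact mul_le_mul_of_nonneg_left hinv_le (by positivity)
      _ < (1 / 2) * (1 + |t|) := by nlinarith
  have habs1 : |t| - |ω| ≤ |ω - t| := by
    calc |t| - |ω| ≤ |t - ω| := abs_sub_abs_le_abs_sub t ω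
      _ = |ω - t| := abs_sub_comm t ω
  have habs2 : |ω| - |t| ≤ |ω - t| := abs_sub_abs_le_abs_sub ω t
  have h1 : 1 + |t| ≤ 2 * (1 + |ω|) := by linarith
  have h2 : 1 + |ω| ≤ 2 * (1 + |t|) := by linarith
  -- comparability of the two betas
  have hβ : beta α t ≤ 2 * beta α ω := by
    have hX2Y : (1 + |ω|) ^ α ≤ 2 * (1 + |t|) ^ α :=
      rpow_two_mul_le α _ _ hα0 hα1.le hω1.le hb1.le h2
    have : (1:ℝ) / ((1 + |t|) ^ α) ≤ 2 / ((1 + |ω|) ^ α) := by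
      rw [div_le_div_iff₀ hYpos hXpos]; linarith
    have hbt : beta α t = ((1 + |t|) ^ α)⁻¹ := by
      rw [← hbinv, inv_inv]
    have hbω : beta α ω = ((1 + |ω|) ^ α)⁻¹ := by
      rw [← hbωinv, inv_inv]
    rw [hbt, hbω]
    simpa [one_div, div_eq_mul_inv] using this
  have hβinv : (beta α t)⁻¹ ≤ 2 * (beta α ω)⁻¹ := by
    rw [hbinv, hbωinv]
    exact rpow_two_mul_le α _ _ hα0 hα1.le hb1.le hω1.le h1
  constructor
  · -- horizontal bound
    have hxy : |x - y| < 2 * ε * beta α t := by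
      rw [abs_sub_lt_iff]
      have hd : ε * beta α t * ((k:ℝ) + 1) - ε * beta α t * ((k:ℝ) - 1)
          = 2 * ε * beta α t := by ring
      constructor <;> linarith [hx.1.1, hx.1.2, hy.1.1, hy.1.2]
    calc |x - y| < 2 * ε * beta α t := hxy
      _ ≤ 2 * ε * (2 * beta α ω) := by
          exact mul_le_mul_of_nonneg_left hβ (by positivity)
      _ = 4 * ε * beta α ω := by ring
  · -- vertical bound
    have hηt : |η - t| < 2 * ε * c * (beta α t)⁻¹ := by
      rw [abs_sub_lt_iff]; constructor <;> linarith [hy.2.1, hy.2.2]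
    have hωη : |ω - η| < 4 * ε * c * (beta α t)⁻¹ := by
      calc |ω - η| ≤ |ω - t| + |t - η| := abs_sub_le ω t η
        _ = |ω - t| + |η - t| := by rw [abs_sub_comm t η]
        _ < 2 * ε * c * (beta α t)⁻¹ + 2 * ε * c * (beta α t)⁻¹ := by
            exact add_lt_add hωt hηt
        _ = 4 * ε * c * (beta α t)⁻¹ := by ring
    calc |ω - η| < 4 * ε * c * (beta α t)⁻¹ := hωη
      _ ≤ 4 * ε * c * (2 * (beta α ω)⁻¹) := by
          exact mul_le_mul_of_nonneg_left hβinv (by positivity)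
      _ = 8 * c * ε * (beta α ω)⁻¹ := by ring
end

section
/- Let r > 1 and let ψ ∈ L²(ℝ) be such that ψ̂ is three times continuously differentiable with |ψ̂^{(n)}(ξ)| ≤ C(1+|ξ|)^{−r} for all ξ ∈ ℝ and n = 0, 1, 2, 3. Then there exist a constant C' > 0 and a function δ : (0, 1/2) → [0, ∞) with δ(ε) → 0 as ε → 0, such that for every 0 < ε < 1/2, all λ, μ, ν ∈ ℝ with |λ| ≤ ε, |μ| ≤ ε, |ν| ≤ ε, all k ∈ {0, 1, 2} and all ξ ∈ ℝ: | (d^k/dξ^k)[ ψ̂(ξ) − e^{2πiμξ}(1+ν)^{−1/2} ψ̂((ξ−λ)/(1+ν)) ] | ≤ C' δ(ε) (1+|ξ|)^{−r+1}. -/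
open MeasureTheory Filter Real Set
open scoped FourierTransform ENNReal

private noncomputable def oscP (c : ℂ) (lam β : ℝ) (f : ℝ → ℂ) (B : ℂ) (j : ℕ) : ℝ → ℂ :=
  fun ζ => Complex.exp (c * ζ) * (B * iteratedDeriv j f ((ζ - lam) / β))

private lemma oscP_hasDerivAt {c : ℂ} {lam β : ℝ} {f : ℝ → ℂ}
    (hsmooth : ContDiff ℝ 3 f) (B : ℂ) (j : ℕ) (hj : j < 3) (x : ℝ) :
    HasDerivAt (oscP c lam β f B j)
      (c * oscP c lam β f B j x + oscP c lam β f (B * ((β⁻¹ : ℝ) : ℂ)) (j+1) x) x := by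
  have hE : HasDerivAt (fun ζ : ℝ => Complex.exp (c * ζ)) (Complex.exp (c * x) * c) x := by
    have h1 : HasDerivAt (fun ζ : ℝ => (c * ζ : ℂ)) c x := by
      simpa using (Complex.ofRealCLM.hasDerivAt (x := x)).const_mul c
    exact h1.cexp
  have hdiff : Differentiable ℝ (iteratedDeriv j f) :=
    hsmooth.differentiable_iteratedDeriv j (by exact_mod_cast hj)
  have hfd : HasDerivAt (iteratedDeriv j f) (iteratedDeriv (j+1) f ((x - lam) / β))
      ((x - lam) / β) := by
    rw [iteratedDeriv_succ]
    exact (hdiff _).hasDerivAt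
  have hτ : HasDerivAt (fun ζ : ℝ => (ζ - lam) / β) β⁻¹ x := by
    simpa [one_div] using ((hasDerivAt_id x).sub_const lam).div_const β
  have hcomp := hfd.scomp x hτ
  have h := hE.mul (hcomp.const_mul B)
  have h' : HasDerivAt (oscP c lam β f B j)
      (Complex.exp (c * x) * c * (B * iteratedDeriv j f ((x - lam) / β))
        + Complex.exp (c * x) * (B * (β⁻¹ • iteratedDeriv (j+1) f ((x - lam) / β)))) x := h
  have hval : Complex.exp (c * x) * c * (B * iteratedDeriv j f ((x - lam) / β))
        + Complex.exp (c * x) * (B * (β⁻¹ • iteratedDeriv (j+1) f ((x - lam) / β)))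
      = c * oscP c lam β f B j x + oscP c lam β f (B * ((β⁻¹ : ℝ) : ℂ)) (j+1) x := by
    simp only [oscP, Complex.real_smul]
    ring
  rw [hval] at h'
  exact h'

set_option maxHeartbeats 1000000 in
private lemma osc_key {r C ε lam μ ν : ℝ} {f : ℝ → ℂ}
    (hr : 1 < r) (hC : 0 < C)
    (hsmooth : ContDiff ℝ 3 f)
    (hdecay : ∀ n ≤ 3, ∀ ξ : ℝ, ‖iteratedDeriv n f ξ‖ ≤ C * (1 + |ξ|) ^ (-r))
    (hε0 : 0 < ε) (hε2 : ε < 1 / 2)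
    (hlam : |lam| ≤ ε) (hmu : |μ| ≤ ε) (hnu : |ν| ≤ ε)
    (k : ℕ) (hk : k ≤ 2) (ξ : ℝ) :
    ‖iteratedDeriv k (fun ζ : ℝ =>
        f ζ - Complex.exp (2 * Real.pi * Complex.I * μ * ζ) *
          (((1 + ν) ^ (-(1 / 2) : ℝ) : ℝ) : ℂ) *
          f ((ζ - lam) / (1 + ν))) ξ‖ ≤
      2000 * C * (ε * (1 - 2 * ε) ^ (-r)) * (1 + |ξ|) ^ (-r + 1) := by
  have hν' := abs_le.mp hnu
  have hμ' := abs_le.mp hmu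
  have hπ : Real.pi ≤ 4 := Real.pi_le_four
  have hπ0 : 0 < Real.pi := Real.pi_pos
  have hβ0 : (0:ℝ) < 1 + ν := by linarith
  have hβlb : (1:ℝ)/2 ≤ 1 + ν := by linarith
  have hβub : 1 + ν ≤ 2 := by linarith
  have h2ε : (0:ℝ) < 1 - 2 * ε := by linarith
  have hL1 : (1:ℝ) ≤ 1 + |ξ| := by linarith [abs_nonneg ξ]
  have hL0 : (0:ℝ) < 1 + |ξ| := by linarith
  have hrneg : -r ≤ 0 := by linarith
  set β : ℝ := 1 + ν with hβdef
  set L : ℝ := 1 + |ξ| with hLdef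
  set c : ℂ := 2 * Real.pi * Complex.I * μ with hcdef
  set A : ℝ := β ^ (-(1 / 2) : ℝ) with hAdef
  set D : ℝ := (1 - 2 * ε) ^ (-r) * L ^ (-r) with hDdef
  clear_value β L c A D
  have hD0 : 0 ≤ D := by
    rw [hDdef]
    exact mul_nonneg (Real.rpow_nonneg h2ε.le _) (Real.rpow_nonneg hL0.le _)
  have hCD : 0 ≤ C * D := mul_nonneg hC.le hD0
  have hεL : 0 ≤ ε * L := mul_nonneg hε0.le hL0.le
  -- norm of c
  have hcI : c = ((2 * Real.pi * μ : ℝ) : ℂ) * Complex.I := by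
    rw [hcdef]; push_cast; ring
  have hc_norm : ‖c‖ = 2 * Real.pi * |μ| := by
    rw [hcI, norm_mul, Complex.norm_I, mul_one, Complex.norm_real, Real.norm_eq_abs,
      abs_mul, abs_of_pos (by positivity : (0:ℝ) < 2 * Real.pi)]
  have hc_le : ‖c‖ ≤ 8 * ε := by
    rw [hc_norm]; nlinarith [abs_nonneg μ]
  have hc_le4 : ‖c‖ ≤ 4 := by linarith
  -- norm of the exponential
  have hE1 : ∀ x : ℝ, ‖Complex.exp (c * x)‖ = 1 := by
    intro x
    have h : c * (x:ℂ) = ((2 * Real.pi * μ * x : ℝ) : ℂ) * Complex.I := by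
      rw [hcI]; push_cast; ring
    rw [h, Complex.norm_exp_ofReal_mul_I]
  have hE_deriv : ∀ x : ℝ, HasDerivAt (fun ζ : ℝ => Complex.exp (c * ζ))
      (Complex.exp (c * x) * c) x := by
    intro x
    have h1 : HasDerivAt (fun ζ : ℝ => (c * ζ : ℂ)) c x := by
      simpa using (Complex.ofRealCLM.hasDerivAt (x := x)).const_mul c
    exact h1.cexp
  -- bound on exp(cξ) - 1
  have hexp_diff : ‖Complex.exp (c * ξ) - 1‖ ≤ 8 * ε * L := by
    have hmvt :=
      Convex.norm_image_sub_le_of_norm_hasDerivWithin_le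
        (f := fun ζ : ℝ => Complex.exp (c * ζ))
        (f' := fun x : ℝ => Complex.exp (c * x) * c) (s := Set.univ) (C := 8 * ε)
        (fun x _ => (hE_deriv x).hasDerivWithinAt)
        (fun x _ => by rw [norm_mul, hE1 x, one_mul]; exact hc_le)
        convex_univ (Set.mem_univ 0) (Set.mem_univ ξ)
    have hmvt2 : ‖Complex.exp (c * (ξ:ℂ)) - 1‖ ≤ 8 * ε * |ξ| := by
      simpa using hmvt
    refine hmvt2.trans ?_
    have : |ξ| ≤ L := by rw [hLdef]; linarith
    nlinarith
  -- derivatives of f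
  have hfd : ∀ j : ℕ, j ≤ 2 → ∀ x : ℝ,
      HasDerivAt (iteratedDeriv j f) (iteratedDeriv (j+1) f x) x := by
    intro j hj x
    have hdiff : Differentiable ℝ (iteratedDeriv j f) :=
      hsmooth.differentiable_iteratedDeriv j (by exact_mod_cast (by omega : j < 3))
    rw [iteratedDeriv_succ]
    exact (hdiff x).hasDerivAt
  have hfd0' : ∀ x : ℝ, HasDerivAt f (iteratedDeriv 1 f x) x := by
    intro x
    have h := hfd 0 (by norm_num) x
    rwa [iteratedDeriv_zero] at h
  -- distance between ξ and the shifted point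
  have hdist : |ξ - (ξ - lam) / β| ≤ 2 * ε * L := by
    have heq : ξ - (ξ - lam) / β = (ν * ξ + lam) / β := by
      rw [eq_div_iff hβ0.ne', sub_mul, div_mul_cancel₀ _ hβ0.ne', hβdef]
      ring
    rw [heq, abs_div, abs_of_pos hβ0, div_le_iff₀ hβ0]
    have h1 : |ν * ξ + lam| ≤ ε * L := by
      calc |ν * ξ + lam| ≤ |ν| * |ξ| + |lam| := by
            rw [← abs_mul]; exact abs_add_le _ _
        _ ≤ ε * |ξ| + ε := by nlinarith [abs_nonneg ξ, abs_nonneg ν, abs_le.mp hlam]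
        _ = ε * L := by rw [hLdef]; ring
    nlinarith
  -- decay bound on the segment
  have hseg : ∀ η ∈ segment ℝ ξ ((ξ - lam) / β), (1 + |η|) ^ (-r) ≤ D := by
    intro η hη
    obtain ⟨u, v, hu, hv, huv, rfl⟩ := hη
    have hdiff2 : |ξ - (u • ξ + v • ((ξ - lam) / β))| ≤ 2 * ε * L := by
      have heq : ξ - (u • ξ + v • ((ξ - lam) / β)) = v * (ξ - (ξ - lam) / β) := by
        simp only [smul_eq_mul]; linear_combination (-ξ) * huv
      rw [heq, abs_mul, abs_of_nonneg hv]
      calc v * |ξ - (ξ - lam) / β| ≤ 1 * |ξ - (ξ - lam) / β| := by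
            apply mul_le_mul_of_nonneg_right _ (abs_nonneg _); linarith
        _ ≤ 2 * ε * L := by rw [one_mul]; exact hdist
    have hge : (1 - 2 * ε) * L ≤ 1 + |u • ξ + v • ((ξ - lam) / β)| := by
      have h1 : |ξ| - |u • ξ + v • ((ξ - lam) / β)| ≤ 2 * ε * L :=
        le_trans (abs_sub_abs_le_abs_sub _ _) hdiff2
      have h2 : L = 1 + |ξ| := hLdef
      nlinarith
    have h12 : (0:ℝ) < (1 - 2 * ε) * L := mul_pos h2ε hL0
    calc (1 + |u • ξ + v • ((ξ - lam) / β)|) ^ (-r)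
        ≤ ((1 - 2 * ε) * L) ^ (-r) := Real.rpow_le_rpow_of_nonpos h12 hge hrneg
      _ = D := by rw [hDdef, Real.mul_rpow h2ε.le hL0.le]
  have hτmem : (ξ - lam) / β ∈ segment ℝ ξ ((ξ - lam) / β) := right_mem_segment ℝ _ _
  have hfdτ : ∀ j : ℕ, j ≤ 2 → ‖iteratedDeriv j f ((ξ - lam) / β)‖ ≤ C * D := by
    intro j hj
    exact (hdecay j (by omega) _).trans
      (mul_le_mul_of_nonneg_left (hseg _ hτmem) hC.le)
  -- mean value estimate for the translation/dilation
  have hsub : ∀ j : ℕ, j ≤ 2 →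
      ‖iteratedDeriv j f ξ - iteratedDeriv j f ((ξ - lam) / β)‖ ≤ C * D * (2 * ε * L) := by
    intro j hj
    have hmvt :=
      Convex.norm_image_sub_le_of_norm_hasDerivWithin_le
        (f := iteratedDeriv j f) (f' := iteratedDeriv (j+1) f)
        (s := segment ℝ ξ ((ξ - lam) / β)) (C := C * D)
        (fun η _ => (hfd j hj η).hasDerivWithinAt)
        (fun η hη => (hdecay (j+1) (by omega) η).trans
          (mul_le_mul_of_nonneg_left (hseg η hη) hC.le))
        (convex_segment _ _) (left_mem_segment ℝ _ _) hτmem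
    rw [norm_sub_rev]
    refine hmvt.trans ?_
    rw [Real.norm_eq_abs, abs_sub_comm]
    exact mul_le_mul_of_nonneg_left hdist hCD
  -- power estimates for β
  have hβs : ∀ s : ℝ, -(5/2) ≤ s → s ≤ 0 → |β ^ s - 1| ≤ 40 * ε := by
    intro s hs1 hs2
    have h16 : ((1:ℝ)/2) ^ (-4 : ℝ) = 16 := by
      rw [show (-4:ℝ) = ((-4 : ℤ) : ℝ) by norm_num, Real.rpow_intCast]
      norm_num
    have hmvt :=
      Convex.norm_image_sub_le_of_norm_hasDerivWithin_le
        (f := fun t : ℝ => t ^ s) (f' := fun t : ℝ => s * t ^ (s - 1))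
        (s := Set.Icc (1/2 : ℝ) 2) (C := 40)
        (fun t ht => (Real.hasDerivAt_rpow_const
          (Or.inl (by linarith [ht.1] : t ≠ 0))).hasDerivWithinAt)
        (fun t ht => by
          rw [Real.norm_eq_abs, abs_mul]
          have hs : |s| ≤ 5/2 := abs_le.mpr ⟨by linarith, by linarith⟩
          have ht0 : (0:ℝ) < t := by linarith [ht.1]
          have h1 : t ^ (s - 1) ≤ ((1:ℝ)/2) ^ (s - 1) :=
            Real.rpow_le_rpow_of_nonpos (by norm_num) ht.1 (by linarith)
          have h2 : ((1:ℝ)/2) ^ (s - 1) ≤ ((1:ℝ)/2) ^ (-4 : ℝ) :=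
            Real.rpow_le_rpow_of_exponent_ge (by norm_num) (by norm_num) (by linarith)
          have h3 : |t ^ (s - 1)| = t ^ (s - 1) := abs_of_nonneg (Real.rpow_nonneg ht0.le _)
          rw [h3]
          nlinarith [Real.rpow_nonneg ht0.le (s - 1), abs_nonneg s])
        (convex_Icc _ _) (show (1:ℝ) ∈ Set.Icc (1/2:ℝ) 2 by
          rw [Set.mem_Icc]; constructor <;> norm_num)
        (Set.mem_Icc.mpr ⟨hβlb, hβub⟩)
    simp only [Real.one_rpow, Real.norm_eq_abs] at hmvt
    have hβ1 : β - 1 = ν := by rw [hβdef]; ring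
    rw [hβ1] at hmvt
    refine hmvt.trans ?_
    nlinarith [abs_nonneg ν]
  have hZfacts : ∀ s : ℝ, -(5/2) ≤ s → s ≤ 0 →
      0 ≤ β ^ s ∧ |β ^ s - 1| ≤ 40 * ε ∧ β ^ s ≤ 21 := by
    intro s hs1 hs2
    have h1 := hβs s hs1 hs2
    have h2 := abs_le.mp h1
    exact ⟨Real.rpow_nonneg hβ0.le _, h1, by linarith⟩
  have hA1 : A * β⁻¹ = β ^ (-(3/2) : ℝ) := by
    rw [hAdef, ← Real.rpow_neg_one β, ← Real.rpow_add hβ0]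
    norm_num
  have hA2 : A * β⁻¹ * β⁻¹ = β ^ (-(5/2) : ℝ) := by
    rw [hA1, ← Real.rpow_neg_one β, ← Real.rpow_add hβ0]
    norm_num
  -- main splitting estimate
  have hmain : ∀ (j : ℕ), j ≤ 2 → ∀ Z : ℝ, 0 ≤ Z → |Z - 1| ≤ 40 * ε → Z ≤ 21 →
      ‖iteratedDeriv j f ξ -
          Complex.exp (c * ξ) * ((Z : ℂ) * iteratedDeriv j f ((ξ - lam) / β))‖
        ≤ 300 * (C * ε * (D * L)) := by
    intro j hj Z hZ0 hZ1 hZ21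
    have hid : iteratedDeriv j f ξ -
          Complex.exp (c * ξ) * ((Z : ℂ) * iteratedDeriv j f ((ξ - lam) / β))
        = (iteratedDeriv j f ξ - iteratedDeriv j f ((ξ - lam) / β))
          + (1 - Complex.exp (c * ξ) * (Z : ℂ)) * iteratedDeriv j f ((ξ - lam) / β) := by
      ring
    rw [hid]
    have h2 : ‖(1 : ℂ) - Complex.exp (c * ξ) * (Z : ℂ)‖ ≤ 250 * (ε * L) := by
      have hid2 : (1 : ℂ) - Complex.exp (c * ξ) * (Z : ℂ)
          = (1 - Complex.exp (c * ξ)) * (Z : ℂ) + ((1 - Z : ℝ) : ℂ) := by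
        push_cast; ring
      rw [hid2]
      refine (norm_add_le _ _).trans ?_
      have e1 : ‖((1:ℂ) - Complex.exp (c * ξ)) * (Z : ℂ)‖ ≤ (8 * ε * L) * 21 := by
        rw [norm_mul]
        have ha : ‖(1:ℂ) - Complex.exp (c * ξ)‖ ≤ 8 * ε * L := by
          rw [norm_sub_rev]; exact hexp_diff
        have hb : ‖((Z : ℝ) : ℂ)‖ ≤ 21 := by
          rw [Complex.norm_real, Real.norm_eq_abs, abs_of_nonneg hZ0]; exact hZ21
        exact mul_le_mul ha hb (norm_nonneg _) (by positivity)
      have e2 : ‖((1 - Z : ℝ) : ℂ)‖ ≤ 40 * ε := by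
        rw [Complex.norm_real, Real.norm_eq_abs, abs_sub_comm]; exact hZ1
      nlinarith [mul_le_mul_of_nonneg_left hL1 hε0.le]
    calc ‖(iteratedDeriv j f ξ - iteratedDeriv j f ((ξ - lam) / β))
          + (1 - Complex.exp (c * ξ) * (Z : ℂ)) * iteratedDeriv j f ((ξ - lam) / β)‖
        ≤ ‖iteratedDeriv j f ξ - iteratedDeriv j f ((ξ - lam) / β)‖
          + ‖(1 - Complex.exp (c * ξ) * (Z : ℂ))‖ * ‖iteratedDeriv j f ((ξ - lam) / β)‖ := by
          refine (norm_add_le _ _).trans ?_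
          rw [norm_mul]
      _ ≤ C * D * (2 * ε * L) + 250 * (ε * L) * (C * D) := by
          refine add_le_add (hsub j hj) ?_
          exact mul_le_mul h2 (hfdτ j hj) (norm_nonneg _) (by positivity)
      _ ≤ 300 * (C * ε * (D * L)) := by nlinarith [mul_nonneg hCD hεL]
  -- bound for the building blocks
  have hoscP : ∀ (j : ℕ), j ≤ 2 → ∀ Z : ℝ, 0 ≤ Z → Z ≤ 21 →
      ‖oscP c lam β f ((Z : ℝ) : ℂ) j ξ‖ ≤ 21 * (C * D) := by
    intro j hj Z hZ0 hZ21
    simp only [oscP]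
    rw [norm_mul, hE1, one_mul, norm_mul, Complex.norm_real, Real.norm_eq_abs,
      abs_of_nonneg hZ0]
    exact mul_le_mul hZ21 (hfdτ j hj) (norm_nonneg _) (by norm_num)
  -- Z facts for the three values
  obtain ⟨hZa0, hZa1, hZa2⟩ := hZfacts (-(1/2)) (by norm_num) (by norm_num)
  obtain ⟨hZb0, hZb1, hZb2⟩ := hZfacts (-(3/2)) (by norm_num) (by norm_num)
  obtain ⟨hZc0, hZc1, hZc2⟩ := hZfacts (-(5/2)) (by norm_num) (by norm_num)
  rw [← hAdef] at hZa0 hZa1 hZa2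
  rw [← hA1] at hZb0 hZb1 hZb2
  rw [← hA2] at hZc0 hZc1 hZc2
  -- rewrite the target function
  have hFeq : (fun ζ : ℝ =>
        f ζ - Complex.exp (c * ζ) * ((A : ℝ) : ℂ) * f ((ζ - lam) / β))
      = fun ζ => f ζ - oscP c lam β f ((A : ℝ) : ℂ) 0 ζ := by
    funext ζ
    simp only [oscP, iteratedDeriv_zero]
    ring
  rw [hFeq]
  -- final constant comparison
  have hDL : D * L = (1 - 2 * ε) ^ (-r) * L ^ (-r + 1) := by
    rw [hDdef]
    have : L ^ (-r) * L = L ^ (-r + 1) := by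
      nth_rewrite 2 [← Real.rpow_one L]
      rw [← Real.rpow_add hL0]
    rw [mul_assoc, this]
  have hRHS : 2000 * (C * ε * (D * L)) = 2000 * C * (ε * (1 - 2 * ε) ^ (-r)) * L ^ (-r + 1) := by
    rw [hDL]; ring
  rw [← hRHS]
  have hCεDL : 0 ≤ C * ε * (D * L) := by positivity
  have hkey : (8 * ε) * (21 * (C * D)) ≤ 168 * (C * ε * (D * L)) := by
    nlinarith [mul_le_mul_of_nonneg_left hL1 (mul_nonneg (mul_nonneg hC.le hε0.le) hD0),
      mul_nonneg (mul_nonneg hC.le hε0.le) hD0]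
  have harith0 : 300 * (C * ε * (D * L)) ≤ 2000 * (C * ε * (D * L)) := by linarith
  have harith1 : 300 * (C * ε * (D * L)) + (8 * ε) * (21 * (C * D))
      ≤ 2000 * (C * ε * (D * L)) := by linarith
  have harith2 : 300 * (C * ε * (D * L)) + 4 * ((8 * ε) * (21 * (C * D)))
      + 2 * ((8 * ε) * (21 * (C * D))) ≤ 2000 * (C * ε * (D * L)) := by linarith
  -- casts
  have hcast1 : ((A : ℝ) : ℂ) * ((β⁻¹ : ℝ) : ℂ) = ((A * β⁻¹ : ℝ) : ℂ) := by push_cast; ring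
  have hcast2 : ((A : ℝ) : ℂ) * ((β⁻¹ : ℝ) : ℂ) * ((β⁻¹ : ℝ) : ℂ)
      = ((A * β⁻¹ * β⁻¹ : ℝ) : ℂ) := by push_cast; ring
  -- derivative structure
  have hB0 : ∀ x : ℝ, HasDerivAt (fun ζ : ℝ => f ζ - oscP c lam β f ((A : ℝ) : ℂ) 0 ζ)
      (iteratedDeriv 1 f x - (c * oscP c lam β f ((A : ℝ) : ℂ) 0 x
        + oscP c lam β f (((A : ℝ) : ℂ) * ((β⁻¹ : ℝ) : ℂ)) 1 x)) x := by
    intro x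
    exact (hfd0' x).sub (oscP_hasDerivAt hsmooth _ 0 (by norm_num) x)
  have hB1 : ∀ x : ℝ, HasDerivAt (fun y : ℝ => iteratedDeriv 1 f y -
        (c * oscP c lam β f ((A : ℝ) : ℂ) 0 y
          + oscP c lam β f (((A : ℝ) : ℂ) * ((β⁻¹ : ℝ) : ℂ)) 1 y))
      (iteratedDeriv 2 f x -
        (c * (c * oscP c lam β f ((A : ℝ) : ℂ) 0 x
            + oscP c lam β f (((A : ℝ) : ℂ) * ((β⁻¹ : ℝ) : ℂ)) 1 x)
          + (c * oscP c lam β f (((A : ℝ) : ℂ) * ((β⁻¹ : ℝ) : ℂ)) 1 x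
            + oscP c lam β f (((A : ℝ) : ℂ) * ((β⁻¹ : ℝ) : ℂ) * ((β⁻¹ : ℝ) : ℂ)) 2 x))) x := by
    intro x
    exact (hfd 1 (by norm_num) x).sub
      (((oscP_hasDerivAt hsmooth _ 0 (by norm_num) x).const_mul c).add
        (oscP_hasDerivAt hsmooth _ 1 (by norm_num) x))
  interval_cases k
  · -- k = 0
    rw [iteratedDeriv_zero]
    have hid0 : f ξ - oscP c lam β f ((A : ℝ) : ℂ) 0 ξ
        = iteratedDeriv 0 f ξ -
          Complex.exp (c * ξ) * (((A : ℝ) : ℂ) * iteratedDeriv 0 f ((ξ - lam) / β)) := by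
      simp only [oscP, iteratedDeriv_zero]
    rw [hid0]
    exact (hmain 0 (by norm_num) A hZa0 hZa1 hZa2).trans harith0
  · -- k = 1
    rw [iteratedDeriv_one, (hB0 ξ).deriv]
    have hid1 : iteratedDeriv 1 f ξ - (c * oscP c lam β f ((A : ℝ) : ℂ) 0 ξ
          + oscP c lam β f (((A : ℝ) : ℂ) * ((β⁻¹ : ℝ) : ℂ)) 1 ξ)
        = (iteratedDeriv 1 f ξ -
            Complex.exp (c * ξ) * (((A * β⁻¹ : ℝ) : ℂ) * iteratedDeriv 1 f ((ξ - lam) / β)))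
          - c * oscP c lam β f ((A : ℝ) : ℂ) 0 ξ := by
      simp only [oscP]
      push_cast
      ring
    rw [hid1]
    refine le_trans (norm_sub_le _ _) ?_
    rw [norm_mul]
    have hmn := hmain 1 (by norm_num) (A * β⁻¹) hZb0 hZb1 hZb2
    have hosc : ‖c‖ * ‖oscP c lam β f ((A : ℝ) : ℂ) 0 ξ‖ ≤ (8 * ε) * (21 * (C * D)) :=
      mul_le_mul hc_le (hoscP 0 (by norm_num) A hZa0 hZa2) (norm_nonneg _) (by positivity)
    exact le_trans (add_le_add hmn hosc) harith1
  · -- k = 2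
    rw [show (2:ℕ) = 1 + 1 from rfl, iteratedDeriv_succ, iteratedDeriv_one,
      funext (fun x => (hB0 x).deriv), (hB1 ξ).deriv]
    have hid2 : iteratedDeriv 2 f ξ -
          (c * (c * oscP c lam β f ((A : ℝ) : ℂ) 0 ξ
              + oscP c lam β f (((A : ℝ) : ℂ) * ((β⁻¹ : ℝ) : ℂ)) 1 ξ)
            + (c * oscP c lam β f (((A : ℝ) : ℂ) * ((β⁻¹ : ℝ) : ℂ)) 1 ξ
              + oscP c lam β f (((A : ℝ) : ℂ) * ((β⁻¹ : ℝ) : ℂ) * ((β⁻¹ : ℝ) : ℂ)) 2 ξ))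
        = ((iteratedDeriv 2 f ξ -
            Complex.exp (c * ξ) * (((A * β⁻¹ * β⁻¹ : ℝ) : ℂ) * iteratedDeriv 2 f ((ξ - lam) / β)))
          - c * (c * oscP c lam β f ((A : ℝ) : ℂ) 0 ξ))
          - (2 : ℂ) * (c * oscP c lam β f (((A : ℝ) : ℂ) * ((β⁻¹ : ℝ) : ℂ)) 1 ξ) := by
      simp only [oscP]
      push_cast
      ring
    rw [hid2, hcast1]
    have n1 : ‖c * (c * oscP c lam β f ((A : ℝ) : ℂ) 0 ξ)‖ ≤ 4 * ((8 * ε) * (21 * (C * D))) := by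
      rw [norm_mul, norm_mul]
      have h1 := hoscP 0 (by norm_num) A hZa0 hZa2
      have h2 : ‖c‖ * ‖oscP c lam β f ((A : ℝ) : ℂ) 0 ξ‖ ≤ (8 * ε) * (21 * (C * D)) :=
        mul_le_mul hc_le h1 (norm_nonneg _) (by positivity)
      calc ‖c‖ * (‖c‖ * ‖oscP c lam β f ((A : ℝ) : ℂ) 0 ξ‖)
          ≤ 4 * (‖c‖ * ‖oscP c lam β f ((A : ℝ) : ℂ) 0 ξ‖) :=
            mul_le_mul_of_nonneg_right hc_le4
              (mul_nonneg (norm_nonneg _) (norm_nonneg _))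
        _ ≤ 4 * ((8 * ε) * (21 * (C * D))) :=
            mul_le_mul_of_nonneg_left h2 (by norm_num)
    have n2 : ‖(2 : ℂ) * (c * oscP c lam β f ((A * β⁻¹ : ℝ) : ℂ) 1 ξ)‖
        ≤ 2 * ((8 * ε) * (21 * (C * D))) := by
      rw [norm_mul, norm_mul]
      have h1 := hoscP 1 (by norm_num) (A * β⁻¹) hZb0 hZb2
      have h2 : ‖c‖ * ‖oscP c lam β f ((A * β⁻¹ : ℝ) : ℂ) 1 ξ‖ ≤ (8 * ε) * (21 * (C * D)) :=
        mul_le_mul hc_le h1 (norm_nonneg _) (by positivity)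
      have h3 : ‖(2:ℂ)‖ = 2 := by norm_num
      rw [h3]
      exact mul_le_mul_of_nonneg_left h2 (by norm_num)
    refine le_trans (norm_sub_le _ _) ?_
    exact le_trans (add_le_add (le_trans (norm_sub_le _ _)
      (add_le_add (hmain 2 (by norm_num) (A * β⁻¹ * β⁻¹) hZc0 hZc1 hZc2) n1)) n2) harith2

/-- estimate for (I − M_μ T_λ D_{1+ν})ψ̂ and its first two
derivatives, uniformly for |λ|,|μ|,|ν| ≤ ε < 1/2, with a factor δ(ε) → 0. -/
theorem oscillation_estimate (r : ℝ) (hr : 1 < r)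
    (ψ : ℝ → ℂ) (hψ : MemLp ψ 2 (volume : Measure ℝ))
    (C : ℝ) (hC : 0 < C)
    (hsmooth : ContDiff ℝ 3 (𝓕 ψ))
    (hdecay : ∀ n ≤ 3, ∀ ξ : ℝ,
      ‖iteratedDeriv n (𝓕 ψ) ξ‖ ≤ C * (1 + |ξ|) ^ (-r)) :
    ∃ C' : ℝ, 0 < C' ∧ ∃ δ : ℝ → ℝ,
      (∀ ε ∈ Set.Ioo (0 : ℝ) (1 / 2), 0 ≤ δ ε) ∧
      Tendsto δ (nhdsWithin 0 (Set.Ioi 0)) (nhds 0) ∧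
      ∀ ε ∈ Set.Ioo (0 : ℝ) (1 / 2), ∀ lam μ ν : ℝ,
        |lam| ≤ ε → |μ| ≤ ε → |ν| ≤ ε → ∀ k ≤ 2, ∀ ξ : ℝ,
          ‖iteratedDeriv k (fun ζ : ℝ =>
              𝓕 ψ ζ - Complex.exp (2 * Real.pi * Complex.I * μ * ζ) *
                (((1 + ν) ^ (-(1 / 2) : ℝ) : ℝ) : ℂ) *
                𝓕 ψ ((ζ - lam) / (1 + ν))) ξ‖ ≤
            C' * δ ε * (1 + |ξ|) ^ (-r + 1) := by
  refine ⟨2000 * C, by positivity, fun ε => ε * (1 - 2 * ε) ^ (-r), ?_, ?_, ?_⟩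
  · rintro ε ⟨hε0, hε2⟩
    exact mul_nonneg hε0.le (Real.rpow_nonneg (by linarith) _)
  · have h1 : ContinuousAt (fun x : ℝ => x ^ (-r)) 1 :=
      Real.continuousAt_rpow_const 1 (-r) (Or.inl one_ne_zero)
    have h2 : ContinuousAt (fun ε : ℝ => 1 - 2 * ε) (0:ℝ) := by fun_prop
    have h3 : ContinuousAt (fun ε : ℝ => ε * (1 - 2 * ε) ^ (-r)) 0 :=
      continuousAt_id.mul (h2.rpow_const (Or.inl (by norm_num)))
    have h4 := h3.tendsto.mono_left (nhdsWithin_le_nhds (s := Set.Ioi (0:ℝ)))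
    simpa using h4
  · rintro ε ⟨hε0, hε2⟩ lam μ ν hlam hmu hnu k hk ξ
    exact osc_key hr hC hsmooth hdecay hε0 hε2 hlam hmu hnu k hk ξ
end
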